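/- Let d ≥ 2 and let G be a finite subgroup of the unitary group U(d) such that (1) G acts irreducibly on ℂ^d (the only subspaces of ℂ^d invariant under every U ∈ G are {0} and ℂ^d), and (2) the orthogonal complement of φ⁰ in ℂ^d ⊗ ℂ^d is irreducible under the action v ↦ (U ⊗ Ū)v, U ∈ G (every subspace of the orthocomplement of φ⁰ invariant under all U ⊗ Ū, U ∈ G, is {0} or the whole orthocomplement). Define T(M_f) := (d²/|G|)·Σ_{U∈G} |w_U⟩⟨w_U| on H_{A₁} ⊗ H_{A₂} ⊗ H_{B₁} ⊗ H_{B₂} (each factor ℂ^d), where w_U := (1/√d)·vec U ⊗ (1/√d)·vec Ū lives in (H_{A₁} ⊗ H_{A₂}) ⊗ (H_{B₁} ⊗ H_{B₂}). Then T(M_f) = S·( |φ⁰⟩⟨φ⁰| ⊗ |φ⁰⟩⟨φ⁰| + (1/(d²−1))·(I − |φ⁰⟩⟨φ⁰|) ⊗ (I − |φ⁰⟩⟨φ⁰|) )·S⁻¹, where the right-hand operator is written on (H_{A₁} ⊗ H_{B₁}) ⊗ (H_{A₂} ⊗ H_{B₂}) and S is the unitary permutation of tensor factors swapping the second and third factors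 (so that pairing (A₁,B₁),(A₂,B₂) is carried to the ordering A₁,A₂,B₁,B₂). -/

import Mathlib

/-!
The map `ρ(U) = U ⊗ Ū` is a unitary representation of `G` fixing `φ⁰`, and by hypothesis it is
irreducible on `φ⁰ᗮ`, of dimension `d² - 1 ≥ 3`. Schur's lemma then says that the matrices commuting
with `ρ(G)` are the combinations of `P = |φ⁰⟩⟨φ⁰|` and `1 - P`. The group average
`A ↦ |G|⁻¹ Σ_U ρ(U) A ρ(U)*` lands in this commutant and preserves `tr A` and `tr (P A)`, so it is
`A ↦ tr (P A) P + (tr A - tr (P A)) / (d² - 1) (1 - P)`. Regrouping the tensor factors by `S`,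
`w_U` becomes a column of `ρ(U)` scaled by `1/d`, so the entries of `T(M_f)` are exactly the
entries of this average applied to the matrix units.
-/

open scoped BigOperators ComplexInnerProductSpace
open Matrix MeasureTheory

noncomputable section

/-- `ℂ^d` with the standard Hermitian inner product. -/
abbrev V (d : ℕ) : Type := EuclideanSpace ℂ (Fin d)

/-- `ℂ^d ⊗ ℂ^d`, identified with functions on `Fin d × Fin d`. -/
abbrev V2 (d : ℕ) : Type := EuclideanSpace ℂ (Fin d × Fin d)

/-- operators on `ℂ^d ⊗ ℂ^d`, as matrices. -/
abbrev Op2 (d : ℕ) : Type := Matrix (Fin d × Fin d) (Fin d × Fin d) ℂ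

/-- tensor (Kronecker) product of vectors. -/
def tens {d : ℕ} (u v : V d) : V2 d := WithLp.toLp 2 fun p => u p.1 * v p.2

/-- entrywise complex conjugate `ū` of a vector. -/
def cvec {d : ℕ} (u : V d) : V d := WithLp.toLp 2 fun k => starRingEnd ℂ (u k)

/-- the maximally entangled state `φ⁰ = (1/√d) Σ_k e_k ⊗ e_k`. -/
def phi0 (d : ℕ) : V2 d := WithLp.toLp 2 fun p => if p.1 = p.2 then ((Real.sqrt d : ℂ))⁻¹ else 0

/-- the rank-one operator `|w⟩⟨w|`. -/
def outer {d : ℕ} (w : V2 d) : Op2 d := Matrix.of fun p q => w p * starRingEnd ℂ (w q)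

/-- `T_inv = |φ⁰⟩⟨φ⁰| + (1/(d+1))(I - |φ⁰⟩⟨φ⁰|)`. -/
def Tinv (d : ℕ) : Op2 d := outer (phi0 d) + (1 / ((d : ℂ) + 1)) • (1 - outer (phi0 d))


/-- four-fold index set for `ℂ^d ⊗ ℂ^d ⊗ ℂ^d ⊗ ℂ^d`. -/
abbrev I4 (d : ℕ) : Type := Fin d × Fin d × Fin d × Fin d

/-- `ℂ^d ⊗ ℂ^d ⊗ ℂ^d ⊗ ℂ^d`. -/
abbrev V4 (d : ℕ) : Type := I4 d → ℂ

/-- operators on the four-fold tensor product, as matrices. -/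
abbrev Op4 (d : ℕ) : Type := Matrix (I4 d) (I4 d) ℂ

/-- the rank-one operator `|w⟩⟨w|` on the four-fold tensor product. -/
def outer4 {d : ℕ} (w : V4 d) : Op4 d := Matrix.of fun p q => w p * starRingEnd ℂ (w q)

/-- entrywise complex conjugate `Ū` of a matrix. -/
def mconj {d : ℕ} (U : Matrix (Fin d) (Fin d) ℂ) : Matrix (Fin d) (Fin d) ℂ :=
  U.map (starRingEnd ℂ)

/-- `w_U = ((1/√d) vec U) ⊗ ((1/√d) vec Ū)` on the factors `A₁, A₂, B₁, B₂`. -/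
def wU {d : ℕ} (U : Matrix (Fin d) (Fin d) ℂ) : V4 d := fun p =>
  (((Real.sqrt d : ℂ))⁻¹ * U p.1 p.2.1) *
    (((Real.sqrt d : ℂ))⁻¹ * starRingEnd ℂ (U p.2.2.1 p.2.2.2))

/-- the test `T(M_f) = (d²/|G|) Σ_{U ∈ G} |w_U⟩⟨w_U|`. -/
def TMf (d : ℕ) (G : Subgroup (Matrix.unitaryGroup (Fin d) ℂ)) [Fintype G] : Op4 d :=
  (((d : ℂ) ^ 2) / (Fintype.card G : ℂ)) •
    ∑ U : G, outer4 (wU ((U : Matrix.unitaryGroup (Fin d) ℂ) : Matrix (Fin d) (Fin d) ℂ))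

/-- `A ⊗ B` for operators on `ℂ^d`, acting on `ℂ^d ⊗ ℂ^d`. -/
def tensM {d : ℕ} (A B : Matrix (Fin d) (Fin d) ℂ) : Op2 d :=
  Matrix.of fun p q => A p.1 q.1 * B p.2 q.2

/-- `M ⊗ N` for two operators on `ℂ^d ⊗ ℂ^d`, placed on the factor pairs
`(1,2)` and `(3,4)` of the four-fold tensor product. -/
def tens22 {d : ℕ} (M N : Op2 d) : Op4 d :=
  Matrix.of fun p q =>
    M (p.1, p.2.1) (q.1, q.2.1) * N (p.2.2.1, p.2.2.2) (q.2.2.1, q.2.2.2)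

/-- the unitary permutation of tensor factors swapping the second and third
factors. -/
def swap23 (d : ℕ) : Op4 d :=
  Matrix.of fun p q =>
    if p.1 = q.1 ∧ p.2.1 = q.2.2.1 ∧ p.2.2.1 = q.2.1 ∧ p.2.2.2 = q.2.2.2 then 1 else 0

open scoped Kronecker

section UnitaryRepresentation

variable {n : Type*} [Fintype n] {φ : EuclideanSpace ℂ n}

theorem mem_orthogonal_singleton_iff_star_dotProduct {x : EuclideanSpace ℂ n} :
    x ∈ (ℂ ∙ φ)ᗮ ↔ star φ ⬝ᵥ x = 0 := by
  rw [Submodule.mem_orthogonal_singleton_iff_inner_right, EuclideanSpace.inner_eq_star_dotProduct,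
    dotProduct_comm]

theorem star_dotProduct_self_of_norm_eq_one (hφ : ‖φ‖ = 1) : star φ ⬝ᵥ φ = 1 := by
  rw [dotProduct_comm, ← EuclideanSpace.inner_eq_star_dotProduct, inner_self_eq_norm_sq_to_K, hφ]
  simp

theorem sub_smul_mem_orthogonal_singleton (hφ : ‖φ‖ = 1) (x : EuclideanSpace ℂ n) :
    x - (star φ ⬝ᵥ x) • φ ∈ (ℂ ∙ φ)ᗮ := by
  rw [mem_orthogonal_singleton_iff_star_dotProduct, WithLp.ofLp_sub, WithLp.ofLp_smul,
    dotProduct_sub, dotProduct_smul, star_dotProduct_self_of_norm_eq_one hφ, smul_eq_mul, mul_one,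
    sub_self]

theorem vecMulVec_star_mulVec (x : n → ℂ) :
    vecMulVec φ (star φ) *ᵥ x = (star φ ⬝ᵥ x) • φ.ofLp := by
  rw [vecMulVec_mulVec, op_smul_eq_smul]

theorem mulVec_mem_orthogonal_singleton {B : Matrix n n ℂ} {c : ℂ}
    (hB : Bᴴ *ᵥ φ = c • φ) {w : EuclideanSpace ℂ n} (hw : w ∈ (ℂ ∙ φ)ᗮ) :
    WithLp.toLp 2 (B *ᵥ w) ∈ (ℂ ∙ φ)ᗮ := by
  rw [mem_orthogonal_singleton_iff_star_dotProduct] at hw ⊢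
  have : star φ.ofLp ᵥ* B = star c • star φ.ofLp := by
    rw [← conjTranspose_conjTranspose B, ← star_mulVec, hB, star_smul]
  rw [dotProduct_mulVec, this, smul_dotProduct, hw, smul_zero]

theorem conjTranspose_mul_vecMulVec_star_mul (U : Matrix n n ℂ) (x : n → ℂ) :
    Uᴴ * vecMulVec x (star x) * U = vecMulVec (Uᴴ *ᵥ x) (star (Uᴴ *ᵥ x)) := by
  rw [mul_vecMulVec, vecMulVec_mul, star_mulVec, conjTranspose_conjTranspose]

theorem finrank_orthogonal_span_singleton_add_one (hφ : φ ≠ 0) :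
    Module.finrank ℂ (ℂ ∙ φ)ᗮ + 1 = Fintype.card n := by
  rw [← finrank_span_singleton (K := ℂ) hφ, add_comm, Submodule.finrank_add_finrank_orthogonal,
    finrank_euclideanSpace]

variable [DecidableEq n] {G : Type*} [Group G]

def IsIrreducibleOn (ρ : G →* unitaryGroup n ℂ) (K : Submodule ℂ (EuclideanSpace ℂ n)) : Prop :=
  ∀ W ≤ K, (∀ g, ∀ w ∈ W, WithLp.toLp 2 ((ρ g : Matrix n n ℂ) *ᵥ w) ∈ W) → W = ⊥ ∨ W = K

variable {ρ : G →* unitaryGroup n ℂ}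

theorem eq_zero_of_forall_mulVec_eq (hirr : IsIrreducibleOn ρ (ℂ ∙ φ)ᗮ)
    (hdim : 1 < Module.finrank ℂ (ℂ ∙ φ)ᗮ) {v : EuclideanSpace ℂ n} (hv : v ∈ (ℂ ∙ φ)ᗮ)
    (hfix : ∀ g, (ρ g : Matrix n n ℂ) *ᵥ v = v) : v = 0 := by
  have hinv : ∀ g, ∀ w ∈ ℂ ∙ v, WithLp.toLp 2 ((ρ g : Matrix n n ℂ) *ᵥ w) ∈ ℂ ∙ v := by
    intro g w hw
    obtain ⟨c, rfl⟩ := Submodule.mem_span_singleton.mp hw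
    rw [WithLp.ofLp_smul, mulVec_smul, hfix, WithLp.toLp_smul, WithLp.toLp_ofLp]
    exact Submodule.smul_mem _ c (Submodule.mem_span_singleton_self v)
  rcases hirr _ ((Submodule.span_singleton_le_iff_mem _ _).mpr hv) hinv with h | h
  · exact Submodule.span_singleton_eq_bot.mp h
  · have := finrank_span_le_card (R := ℂ) ({v} : Set (EuclideanSpace ℂ n))
    rw [h, Set.toFinset_singleton, Finset.card_singleton] at this
    omega

theorem conjTranspose_mulVec_eq_self (hfix : ∀ g, (ρ g : Matrix n n ℂ) *ᵥ φ = φ) (g : G) :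
    (ρ g : Matrix n n ℂ)ᴴ *ᵥ φ = φ := by
  rw [← star_eq_conjTranspose, ← Unitary.coe_star, Unitary.star_eq_inv, ← map_inv, hfix]

theorem commute_conjTranspose {A : Matrix n n ℂ} (hA : ∀ g, Commute (ρ g : Matrix n n ℂ) A)
    (g : G) : Commute (ρ g : Matrix n n ℂ) Aᴴ := by
  have := (hA g⁻¹).star_star
  rwa [map_inv, ← Unitary.star_eq_inv, Unitary.coe_star, star_star, star_eq_conjTranspose]
    at this

theorem mulVec_eq_smul_of_commute (hφ : ‖φ‖ = 1) (hfix : ∀ g, (ρ g : Matrix n n ℂ) *ᵥ φ = φ)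
    (hirr : IsIrreducibleOn ρ (ℂ ∙ φ)ᗮ) (hdim : 1 < Module.finrank ℂ (ℂ ∙ φ)ᗮ) {A : Matrix n n ℂ}
    (hA : ∀ g, Commute (ρ g : Matrix n n ℂ) A) :
    A *ᵥ φ = (star φ ⬝ᵥ (A *ᵥ φ)) • φ.ofLp := by
  -- the component of `A φ` orthogonal to `φ` is a `ρ`-fixed vector of `φᗮ`
  have hv := sub_smul_mem_orthogonal_singleton hφ (WithLp.toLp 2 (A *ᵥ φ))
  have h := eq_zero_of_forall_mulVec_eq hirr hdim hv fun g => by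
    simp only [WithLp.ofLp_sub, WithLp.ofLp_smul, mulVec_sub, mulVec_smul, hfix, mulVec_mulVec,
      (hA g).eq]
    rw [← mulVec_mulVec, hfix]
  exact sub_eq_zero.mp (congrArg WithLp.ofLp h)

theorem exists_mulVec_eq_smul_of_commute (hφ : ‖φ‖ = 1)
    (hfix : ∀ g, (ρ g : Matrix n n ℂ) *ᵥ φ = φ) (hirr : IsIrreducibleOn ρ (ℂ ∙ φ)ᗮ)
    (hdim : 1 < Module.finrank ℂ (ℂ ∙ φ)ᗮ) {A : Matrix n n ℂ}
    (hA : ∀ g, Commute (ρ g : Matrix n n ℂ) A) :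
    ∃ c : ℂ, ∀ w ∈ (ℂ ∙ φ)ᗮ, A *ᵥ w = c • w.ofLp := by
  have hAK : ∀ w ∈ (ℂ ∙ φ)ᗮ, toLpLin 2 2 A w ∈ (ℂ ∙ φ)ᗮ := fun w hw =>
    mulVec_mem_orthogonal_singleton
      (mulVec_eq_smul_of_commute hφ hfix hirr hdim (commute_conjTranspose hA)) hw
  have : Nontrivial (ℂ ∙ φ)ᗮ := Module.nontrivial_of_finrank_pos (R := ℂ) (by omega)
  obtain ⟨c, hc⟩ := Module.End.exists_eigenvalue ((toLpLin 2 2 A).restrict hAK)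
  obtain ⟨v, hv⟩ := hc.exists_hasEigenvector
  -- the `c`-eigenspace of `A` inside `φᗮ` is nonzero and `ρ`-invariant, hence all of `φᗮ`
  set W := (ℂ ∙ φ)ᗮ ⊓ Module.End.eigenspace (toLpLin 2 2 A) c
  have hmem : ∀ w, w ∈ W ↔ w ∈ (ℂ ∙ φ)ᗮ ∧ A *ᵥ w = c • w.ofLp := fun w => by
    rw [Submodule.mem_inf, Module.End.mem_eigenspace_iff, toLpLin_apply]
    exact and_congr_right' ⟨congrArg WithLp.ofLp, congrArg (WithLp.toLp 2)⟩
  have hinv : ∀ g, ∀ w ∈ W, WithLp.toLp 2 ((ρ g : Matrix n n ℂ) *ᵥ w) ∈ W := by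
    intro g w hw
    rw [hmem] at hw ⊢
    refine ⟨mulVec_mem_orthogonal_singleton (c := 1) ?_ hw.1, ?_⟩
    · rw [one_smul, conjTranspose_mulVec_eq_self hfix]
    · rw [mulVec_mulVec, ← (hA g).eq, ← mulVec_mulVec, hw.2, mulVec_smul]
  rcases hirr W inf_le_left hinv with h | h
  · have hvW : (v : EuclideanSpace ℂ n) ∈ W :=
      (hmem _).2 ⟨v.2, congrArg (WithLp.ofLp ∘ Subtype.val) hv.apply_eq_smul⟩
    rw [h, Submodule.mem_bot] at hvW
    exact (hv.2 (Submodule.coe_eq_zero.mp hvW)).elim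
  · exact ⟨c, fun w hw => ((hmem w).1 (h ▸ hw)).2⟩

theorem eq_smul_add_smul_of_commute (hφ : ‖φ‖ = 1)
    (hfix : ∀ g, (ρ g : Matrix n n ℂ) *ᵥ φ = φ) (hirr : IsIrreducibleOn ρ (ℂ ∙ φ)ᗮ)
    (hdim : 1 < Module.finrank ℂ (ℂ ∙ φ)ᗮ) {A : Matrix n n ℂ}
    (hA : ∀ g, Commute (ρ g : Matrix n n ℂ) A) :
    ∃ α β : ℂ, A = α • vecMulVec φ (star φ) + β • (1 - vecMulVec φ (star φ)) := by
  obtain ⟨β, hβ⟩ := exists_mulVec_eq_smul_of_commute hφ hfix hirr hdim hA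
  refine ⟨star φ ⬝ᵥ (A *ᵥ φ), β, ext_of_mulVec_single fun i => ?_⟩
  set x : EuclideanSpace ℂ n := WithLp.toLp 2 (Pi.single i 1)
  have hx := hβ _ (sub_smul_mem_orthogonal_singleton hφ x)
  simp only [WithLp.ofLp_sub, WithLp.ofLp_smul, mulVec_sub, mulVec_smul] at hx
  rw [mulVec_eq_smul_of_commute hφ hfix hirr hdim hA, sub_eq_iff_eq_add] at hx
  rw [add_mulVec, smul_mulVec, smul_mulVec, sub_mulVec, one_mulVec, vecMulVec_star_mulVec]
  change A *ᵥ x.ofLp = _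
  rw [hx]
  module

variable [Fintype G]

def twirl (ρ : G →* unitaryGroup n ℂ) (A : Matrix n n ℂ) : Matrix n n ℂ :=
  (Fintype.card G : ℂ)⁻¹ • ∑ g, (ρ g : Matrix n n ℂ) * A * star (ρ g : Matrix n n ℂ)

theorem commute_twirl (A : Matrix n n ℂ) (h : G) : Commute (ρ h : Matrix n n ℂ) (twirl ρ A) := by
  rw [twirl, Commute, SemiconjBy, mul_smul_comm, smul_mul_assoc, Finset.mul_sum, Finset.sum_mul]
  congr 1
  refine Fintype.sum_equiv (Equiv.mulLeft h) _ _ fun g => ?_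
  simp only [Equiv.coe_mulLeft, map_mul, Submonoid.coe_mul, star_mul, mul_assoc,
    Unitary.coe_star_mul_self, mul_one]

theorem trace_twirl (A : Matrix n n ℂ) : (twirl ρ A).trace = A.trace := by
  have hterm : ∀ g, ((ρ g : Matrix n n ℂ) * A * star (ρ g : Matrix n n ℂ)).trace = A.trace :=
    fun g => by rw [trace_mul_cycle, Unitary.coe_star_mul_self, one_mul]
  simp only [twirl, trace_smul, trace_sum, hterm, Finset.sum_const, Finset.card_univ,
    nsmul_eq_mul, smul_eq_mul]
  rw [← mul_assoc, inv_mul_cancel₀ (by exact_mod_cast Fintype.card_ne_zero), one_mul]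

theorem trace_vecMulVec_star_mul_twirl (hfix : ∀ g, (ρ g : Matrix n n ℂ) *ᵥ φ = φ)
    (A : Matrix n n ℂ) :
    (vecMulVec φ (star φ) * twirl ρ A).trace = (vecMulVec φ (star φ) * A).trace := by
  have hterm : ∀ g, (vecMulVec φ (star φ) * ((ρ g : Matrix n n ℂ) * A *
      star (ρ g : Matrix n n ℂ))).trace = (vecMulVec φ (star φ) * A).trace := fun g => by
    rw [← mul_assoc, trace_mul_comm, ← mul_assoc, ← mul_assoc, star_eq_conjTranspose,
      conjTranspose_mul_vecMulVec_star_mul, conjTranspose_mulVec_eq_self hfix]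
  rw [twirl, Matrix.mul_smul, trace_smul, Finset.mul_sum, trace_sum]
  simp only [hterm, Finset.sum_const, Finset.card_univ, nsmul_eq_mul, smul_eq_mul]
  rw [← mul_assoc, inv_mul_cancel₀ (by exact_mod_cast Fintype.card_ne_zero), one_mul]

theorem twirl_eq (hφ : ‖φ‖ = 1) (hfix : ∀ g, (ρ g : Matrix n n ℂ) *ᵥ φ = φ)
    (hirr : IsIrreducibleOn ρ (ℂ ∙ φ)ᗮ) (hdim : 1 < Module.finrank ℂ (ℂ ∙ φ)ᗮ) (A : Matrix n n ℂ) :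
    twirl ρ A = (vecMulVec φ (star φ) * A).trace • vecMulVec φ (star φ) +
      ((A.trace - (vecMulVec φ (star φ) * A).trace) / (Fintype.card n - 1)) •
        (1 - vecMulVec φ (star φ)) := by
  -- the twirl preserves `tr` and `tr (P * ·)`, which read off the two coefficients
  obtain ⟨α, β, h⟩ := eq_smul_add_smul_of_commute hφ hfix hirr hdim (commute_twirl A)
  set P := vecMulVec φ (star φ)
  have hφφ := star_dotProduct_self_of_norm_eq_one hφ
  have hPP : P * P = P := by rw [vecMulVec_mul_vecMulVec, hφφ, one_smul]
  have htrP : P.trace = 1 := by rw [trace_vecMulVec, dotProduct_comm, hφφ]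
  have hcard : (Fintype.card n : ℂ) - 1 ≠ 0 := by
    have := finrank_orthogonal_span_singleton_add_one (norm_ne_zero_iff.mp (hφ ▸ one_ne_zero))
    rw [sub_ne_zero, ← this]
    exact_mod_cast (by omega : Module.finrank ℂ (ℂ ∙ φ)ᗮ + 1 ≠ 1)
  have hα : (P * twirl ρ A).trace = α := by
    rw [h, mul_add, Matrix.mul_smul, Matrix.mul_smul, hPP, mul_sub, mul_one, hPP, sub_self,
      smul_zero, add_zero, trace_smul, htrP, smul_eq_mul, mul_one]
  have hβ : (twirl ρ A).trace = α + β * (Fintype.card n - 1) := by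
    rw [h, trace_add, trace_smul, trace_smul, trace_sub, trace_one, htrP, smul_eq_mul,
      smul_eq_mul, mul_one]
  rw [trace_twirl] at hβ
  rw [trace_vecMulVec_star_mul_twirl hfix] at hα
  rw [h, hα, hβ, add_sub_cancel_left, mul_div_cancel_right₀ _ hcard]

theorem twirl_single_apply (i j k l : n) :
    twirl ρ (single i j 1) k l =
      (Fintype.card G : ℂ)⁻¹ * ∑ g, (ρ g : Matrix n n ℂ) k i * star ((ρ g : Matrix n n ℂ) l j) := by
  simp [twirl, Matrix.sum_apply, mul_apply, single_apply, ite_and]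

theorem twirl_single_eq (hφ : ‖φ‖ = 1)
    (hfix : ∀ g, (ρ g : Matrix n n ℂ) *ᵥ φ = φ) (hirr : IsIrreducibleOn ρ (ℂ ∙ φ)ᗮ)
    (hdim : 1 < Module.finrank ℂ (ℂ ∙ φ)ᗮ) (i j : n) :
    twirl ρ (single i j 1) = vecMulVec φ (star φ) j i • vecMulVec φ (star φ) +
      ((1 - vecMulVec φ (star φ)) j i / (Fintype.card n - 1)) • (1 - vecMulVec φ (star φ)) := by
  rw [twirl_eq hφ hfix hirr hdim, trace_mul_single, ← Matrix.one_mul (single i j (1 : ℂ)),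
    trace_mul_single, Matrix.sub_apply]
  simp only [op_smul_eq_smul, one_smul]

end UnitaryRepresentation

theorem permMatrix_mul_mul_inv_permMatrix {ι R : Type*} [Fintype ι] [DecidableEq ι] [CommRing R]
    (σ : Equiv.Perm ι) (M : Matrix ι ι R) :
    σ.permMatrix R * M * (σ.permMatrix R)⁻¹ = M.submatrix σ σ := by
  have hinv : (σ.permMatrix R)⁻¹ = σ⁻¹.permMatrix R :=
    inv_eq_left_inv (by rw [← permMatrix_mul, mul_inv_cancel, permMatrix_one])
  rw [hinv, PEquiv.toMatrix_toPEquiv_mul, PEquiv.mul_toMatrix_toPEquiv, submatrix_submatrix]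
  rfl

def swapMid (α β γ : Type*) : Equiv.Perm (α × β × β × γ) where
  toFun p := (p.1, p.2.2.1, p.2.1, p.2.2.2)
  invFun p := (p.1, p.2.2.1, p.2.1, p.2.2.2)

theorem swapMid_apply {α β γ : Type*} (p : α × β × β × γ) :
    swapMid α β γ p = (p.1, p.2.2.1, p.2.1, p.2.2.2) := rfl

theorem swap23_eq_permMatrix (d : ℕ) : swap23 d = (swapMid _ _ _).permMatrix ℂ := by
  ext ⟨a, b, c, e⟩ ⟨a', b', c', e'⟩
  simp only [swap23, of_apply, PEquiv.toMatrix_apply, Equiv.toPEquiv_apply, Option.mem_def,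
    Option.some.injEq, swapMid_apply, Prod.mk.injEq]
  grind

def kroneckerConj (n : Type*) [Fintype n] [DecidableEq n] :
    unitaryGroup n ℂ →* unitaryGroup (n × n) ℂ where
  toFun U := ⟨(U : Matrix n n ℂ) ⊗ₖ (U : Matrix n n ℂ).map (starRingEnd ℂ),
    kronecker_mem_unitary U.2 (Matrix.UnitaryGroup.map_star U).2⟩
  map_one' := Subtype.ext <| by
    change (1 : Matrix n n ℂ) ⊗ₖ (1 : Matrix n n ℂ).map (starRingEnd ℂ) = 1
    rw [Matrix.map_one _ (map_zero _) (map_one _), one_kronecker_one]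
  map_mul' U V := Subtype.ext <| by
    change ((U : Matrix n n ℂ) * (V : Matrix n n ℂ)) ⊗ₖ
      ((U : Matrix n n ℂ) * (V : Matrix n n ℂ)).map (starRingEnd ℂ) = _
    rw [Matrix.map_mul, mul_kronecker_mul]
    rfl

theorem kroneckerConj_mulVec_vec_one {n : Type*} [Fintype n] [DecidableEq n]
    (U : unitaryGroup n ℂ) :
    (kroneckerConj n U : Matrix (n × n) (n × n) ℂ) *ᵥ vec 1 = vec 1 := by
  have h : (U : Matrix n n ℂ).map (starRingEnd ℂ) * (U : Matrix n n ℂ)ᵀ = 1 := by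
    have h := Unitary.coe_mul_star_self (UnitaryGroup.map_star U)
    rwa [Unitary.coe_star, star_eq_conjTranspose, UnitaryGroup.map_star_coe,
      show ((U : Matrix n n ℂ).map star)ᴴ = (U : Matrix n n ℂ)ᵀ by ext; simp] at h
  change (U : Matrix n n ℂ) ⊗ₖ _ *ᵥ vec 1 = vec 1
  rw [kronecker_mulVec_vec, Matrix.mul_one, h]

theorem phi0_eq_smul_vec_one (d : ℕ) : (phi0 d).ofLp = ((Real.sqrt d : ℂ))⁻¹ • vec 1 := by
  ext ⟨i, j⟩
  simp [phi0, vec, one_apply, eq_comm]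

theorem kroneckerConj_mulVec_phi0 {d : ℕ} (U : unitaryGroup (Fin d) ℂ) :
    (kroneckerConj (Fin d) U : Matrix (Fin d × Fin d) (Fin d × Fin d) ℂ) *ᵥ phi0 d = phi0 d := by
  rw [phi0_eq_smul_vec_one, mulVec_smul, kroneckerConj_mulVec_vec_one]

theorem norm_phi0 {d : ℕ} (hd : d ≠ 0) : ‖phi0 d‖ = 1 := by
  rw [EuclideanSpace.norm_eq, Real.sqrt_eq_one, Fintype.sum_prod_type]
  simpa [phi0, apply_ite] using mul_inv_cancel₀ (Nat.cast_ne_zero.mpr hd : (d : ℝ) ≠ 0)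

theorem one_lt_finrank_orthogonal_phi0 {d : ℕ} (hd : 2 ≤ d) :
    1 < Module.finrank ℂ (ℂ ∙ phi0 d)ᗮ := by
  have h := finrank_orthogonal_span_singleton_add_one
    (norm_ne_zero_iff.mp ((norm_phi0 (by omega : d ≠ 0)).trans_ne one_ne_zero))
  rw [Fintype.card_prod, Fintype.card_fin] at h
  nlinarith

theorem outer_eq_vecMulVec {d : ℕ} (w : V2 d) : outer w = vecMulVec w (star w) := rfl

theorem outer_phi0_isSymm (d : ℕ) : (outer (phi0 d)).IsSymm := by
  have : star (phi0 d).ofLp = (phi0 d).ofLp := by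
    rw [phi0_eq_smul_vec_one, star_smul, star_vec]
    simp
  rw [IsSymm, outer_eq_vecMulVec, this, transpose_vecMulVec]

/-- After regrouping the factors as `(A₁, B₁), (A₂, B₂)`, `w_U` is the column of `U ⊗ Ū`
indexed by `(A₂, B₂)`, scaled by `1/d`. -/
theorem wU_apply {d : ℕ} (U : unitaryGroup (Fin d) ℂ) (p : I4 d) :
    wU (U : Matrix (Fin d) (Fin d) ℂ) p =
      (d : ℂ)⁻¹ * (kroneckerConj (Fin d) U : Matrix _ _ ℂ) (p.1, p.2.2.1) (p.2.1, p.2.2.2) := by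
  have h : ((Real.sqrt d : ℂ))⁻¹ * ((Real.sqrt d : ℂ))⁻¹ = (d : ℂ)⁻¹ := by
    rw [← mul_inv, ← Complex.ofReal_mul, Real.mul_self_sqrt (Nat.cast_nonneg _),
      Complex.ofReal_natCast]
  rw [wU, ← h]
  simp only [kroneckerConj, MonoidHom.coe_mk, OneHom.coe_mk, kroneckerMap_apply, map_apply]
  ring

theorem TMf_apply {d : ℕ} (hd : d ≠ 0) (G : Subgroup (unitaryGroup (Fin d) ℂ)) [Fintype G]
    (p q : I4 d) :
    TMf d G p q = twirl ((kroneckerConj (Fin d)).comp G.subtype)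
      (single (p.2.1, p.2.2.2) (q.2.1, q.2.2.2) 1) (p.1, p.2.2.1) (q.1, q.2.2.1) := by
  rw [twirl_single_apply, TMf, Matrix.smul_apply, Matrix.sum_apply, smul_eq_mul, Finset.mul_sum,
    Finset.mul_sum]
  refine Finset.sum_congr rfl fun U _ => ?_
  rw [outer4, of_apply, wU_apply, wU_apply]
  simp only [MonoidHom.coe_comp, Function.comp_apply, Subgroup.coe_subtype, map_mul, map_inv₀,
    Complex.conj_natCast, RCLike.star_def]
  field_simp

theorem stmt14_general (d : ℕ) (hd : 2 ≤ d) (G : Subgroup (Matrix.unitaryGroup (Fin d) ℂ))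
    [Fintype G]
    (h2 : ∀ W : Submodule ℂ (V2 d), W ≤ (ℂ ∙ phi0 d)ᗮ →
      (∀ U ∈ G, ∀ w ∈ W,
        WithLp.toLp 2 ((tensM ((U : Matrix.unitaryGroup (Fin d) ℂ) : Matrix (Fin d) (Fin d) ℂ)
          (mconj ((U : Matrix.unitaryGroup (Fin d) ℂ) : Matrix (Fin d) (Fin d) ℂ))).mulVec w)
          ∈ W) →
      W = ⊥ ∨ W = (ℂ ∙ phi0 d)ᗮ) :
    TMf d G =
      swap23 d *
        (tens22 (outer (phi0 d)) (outer (phi0 d)) +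
          (1 / ((d : ℂ) ^ 2 - 1)) • tens22 (1 - outer (phi0 d)) (1 - outer (phi0 d))) *
        (swap23 d)⁻¹ := by
  have hfix : ∀ g : G, ((kroneckerConj (Fin d)).comp G.subtype g : Matrix _ _ ℂ) *ᵥ phi0 d =
      phi0 d := fun g => kroneckerConj_mulVec_phi0 (G.subtype g)
  have hirr : IsIrreducibleOn ((kroneckerConj (Fin d)).comp G.subtype) (ℂ ∙ phi0 d)ᗮ :=
    fun W hW hinv => h2 W hW fun U hU => hinv ⟨U, hU⟩
  have hP := outer_phi0_isSymm d
  have hQ := (isSymm_one (α := ℂ) (n := Fin d × Fin d)).sub hP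
  rw [swap23_eq_permMatrix, permMatrix_mul_mul_inv_permMatrix]
  ext p q
  rw [TMf_apply (by omega), twirl_single_eq (norm_phi0 (by omega)) hfix hirr
    (one_lt_finrank_orthogonal_phi0 hd), ← outer_eq_vecMulVec]
  simp only [Matrix.add_apply, Matrix.smul_apply, submatrix_apply, swapMid_apply, tens22, of_apply,
    smul_eq_mul, hP.apply, hQ.apply, Fintype.card_prod, Fintype.card_fin]
  push_cast
  ring

/-- Under irreducibility of `G` on `ℂ^d` and of the orthocomplement of `φ⁰`
under `U ⊗ Ū`, the test `T(M_f)` equals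
`S (|φ⁰⟩⟨φ⁰| ⊗ |φ⁰⟩⟨φ⁰| + (1/(d²-1))(I - |φ⁰⟩⟨φ⁰|) ⊗ (I - |φ⁰⟩⟨φ⁰|)) S⁻¹`. -/
theorem stmt14 (d : ℕ) (hd : 2 ≤ d) (G : Subgroup (Matrix.unitaryGroup (Fin d) ℂ))
    [Fintype G]
    (h1 : ∀ W : Submodule ℂ (V d),
      (∀ U ∈ G, ∀ w ∈ W,
        WithLp.toLp 2 (((U : Matrix.unitaryGroup (Fin d) ℂ) : Matrix (Fin d) (Fin d) ℂ).mulVec w) ∈ W) →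
      W = ⊥ ∨ W = ⊤)
    (h2 : ∀ W : Submodule ℂ (V2 d), W ≤ (ℂ ∙ phi0 d)ᗮ →
      (∀ U ∈ G, ∀ w ∈ W,
        WithLp.toLp 2 ((tensM ((U : Matrix.unitaryGroup (Fin d) ℂ) : Matrix (Fin d) (Fin d) ℂ)
          (mconj ((U : Matrix.unitaryGroup (Fin d) ℂ) : Matrix (Fin d) (Fin d) ℂ))).mulVec w)
          ∈ W) →
      W = ⊥ ∨ W = (ℂ ∙ phi0 d)ᗮ) :
    TMf d G =
      swap23 d *
        (tens22 (outer (phi0 d)) (outer (phi0 d)) +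
          (1 / ((d : ℂ) ^ 2 - 1)) • tens22 (1 - outer (phi0 d)) (1 - outer (phi0 d))) *
        (swap23 d)⁻¹ :=
  stmt14_general d hd G h2
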